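/- Given density matrices ρ^{ABC}, σ^A, η^C, σ^{AB}, ω^{BC} on a tripartite finite-dimensional Hilbert space A⊗B⊗C such that ‖ρ^{ABC} − σ^A ⊗ ω^{BC}‖₁ ≤ ε₁ and ‖ρ^{ABC} − σ^{AB} ⊗ η^C‖₁ ≤ ε₂, it holds that ‖ρ^{ABC} − σ^A ⊗ σ^B ⊗ η^C‖₁ ≤ 2ε₁ + ε₂, where σ^B denotes the marginal of σ^{AB} on B. -/

import Mathlib

noncomputable section
open scoped BigOperators
open MeasureTheory Kronecker Matrix
open scoped ComplexOrder
attribute [local instance] Classical.propDecidable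

namespace QIT

variable {ι κ : Type*}

/-- A measurable-space structure on matrices, coming from the product σ-algebra. -/
instance matMeasurableSpace (m n : Type*) : MeasurableSpace (Matrix m n ℂ) :=
  (inferInstance : MeasurableSpace (m → n → ℂ))

/-- Unit vector predicate. -/
def UnitVec {ι : Type*} [Fintype ι] (v : ι → ℂ) : Prop :=
  ∑ i, Complex.normSq (v i) = 1

/-- The pure state (rank-one projector) associated to a vector. -/
def pureState {ι : Type*} (v : ι → ℂ) : Matrix ι ι ℂ :=
  Matrix.vecMulVec v (star v)

/-- Schatten 1-norm (trace norm) of a complex square matrix, via singular values. -/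
def traceNorm [Fintype ι] [DecidableEq ι] (M : Matrix ι ι ℂ) : ℝ :=
  ∑ i, Real.sqrt ((Matrix.isHermitian_conjTranspose_mul_self M).eigenvalues i)

/-- Square root of a positive semidefinite matrix (junk value `0` otherwise). -/
def psqrt [Fintype ι] [DecidableEq ι] (M : Matrix ι ι ℂ) : Matrix ι ι ℂ :=
  if h : M.PosSemidef then
    (h.1.eigenvectorUnitary : Matrix ι ι ℂ) *
      Matrix.diagonal ((↑) ∘ Real.sqrt ∘ h.1.eigenvalues) *
      (star h.1.eigenvectorUnitary : Matrix ι ι ℂ)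
  else 0

/-- Generalised fidelity of two (sub)normalised states. -/
def gFid [Fintype ι] [DecidableEq ι] (ρ σ : Matrix ι ι ℂ) : ℝ :=
  traceNorm (psqrt ρ * psqrt σ) +
    Real.sqrt ((1 - ρ.trace.re) * (1 - σ.trace.re))

/-- Purified distance. -/
def pDist [Fintype ι] [DecidableEq ι] (ρ σ : Matrix ι ι ℂ) : ℝ :=
  Real.sqrt (1 - gFid ρ σ ^ 2)

/-- Purified distance between two pure states given by vectors. -/
def pureDist {ι : Type*} [Fintype ι] (v w : ι → ℂ) : ℝ :=
  Real.sqrt (1 - ‖∑ i, (starRingEnd ℂ) (v i) * w i‖ ^ 2)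

/-- Subnormalised density operator. -/
def IsSubState [Fintype ι] (ρ : Matrix ι ι ℂ) : Prop :=
  ρ.PosSemidef ∧ ρ.trace.re ≤ 1

/-- Normalised density operator. -/
def IsState [Fintype ι] (ρ : Matrix ι ι ℂ) : Prop :=
  ρ.PosSemidef ∧ ρ.trace = 1

/-- ε-smooth conditional min-entropy `H_min^ε(A|B)_ρ` of a bipartite (sub)state,
conditioning on the second tensor factor.  Logarithms are base 2. -/
def Hmin {α β : Type*} [Fintype α] [DecidableEq α] [Fintype β] [DecidableEq β]
    (ε : ℝ) (ρ : Matrix (α × β) (α × β) ℂ) : ℝ :=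
  - Real.logb 2 (sInf {t : ℝ | ∃ ρ' : Matrix (α × β) (α × β) ℂ, ∃ σ : Matrix β β ℂ,
      IsSubState ρ' ∧ pDist ρ' ρ ≤ ε ∧ σ.PosSemidef ∧
      ((1 : Matrix α α ℂ) ⊗ₖ σ - ρ').PosSemidef ∧ t = σ.trace.re})

/-- Unconditional smooth min-entropy (one-dimensional conditioning system). -/
def Hmin0 {α : Type*} [Fintype α] [DecidableEq α] (ε : ℝ) (ρ : Matrix α α ℂ) : ℝ :=
  Hmin ε (ρ.submatrix (fun p : α × Unit => p.1) (fun p : α × Unit => p.1))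

/-- Canonical purification vector of a matrix (meaningful for PSD matrices). -/
def purifyVec [Fintype ι] [DecidableEq ι] (ρ : Matrix ι ι ℂ) : ι × ι → ℂ :=
  fun p => psqrt ρ p.1 p.2

/-- Reduced density matrix of a pure state `v` on a system relabelled by `f : kept × traced → full`. -/
def marg {F K T : Type*} [Fintype T] (f : K × T → F) (v : F → ℂ) : Matrix K K ℂ :=
  Matrix.of fun k k' => ∑ t, v (f (k, t)) * (starRingEnd ℂ) (v (f (k', t)))

/-- Reduced density matrix of a mixed state `M` under the relabelling `f : kept × traced → full`. -/
def margM {F K T : Type*} [Fintype T] (f : K × T → F) (M : Matrix F F ℂ) : Matrix K K ℂ :=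
  Matrix.of fun k k' => ∑ t, M (f (k, t)) (f (k', t))

/-- Partial trace over the first tensor factor. -/
def ptraceFst {T K : Type*} [Fintype T] (M : Matrix (T × K) (T × K) ℂ) : Matrix K K ℂ :=
  Matrix.of fun k k' => ∑ t, M (t, k) (t, k')

/-- Partial trace over the second tensor factor. -/
def ptraceSnd {K T : Type*} [Fintype T] (M : Matrix (K × T) (K × T) ℂ) : Matrix K K ℂ :=
  Matrix.of fun k k' => ∑ t, M (k, t) (k', t)

/-- ε-smooth max-entropy `H_max^ε(A)_ρ := −H_min^ε(A|E)` of (a purification of) `ρ`. -/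
def Hmax {α : Type*} [Fintype α] [DecidableEq α] (ε : ℝ) (ρ : Matrix α α ℂ) : ℝ :=
  - Hmin ε (pureState (purifyVec ρ))

/-- ε-smooth coherent min-information `I_min^ε(A>B)_ρ := H_min^ε(A|E)` evaluated on
(the A,E marginal of) a purification of `ρ^{AB}`. -/
def Imin {α β : Type*} [Fintype α] [DecidableEq α] [Fintype β] [DecidableEq β]
    (ε : ℝ) (ρ : Matrix (α × β) (α × β) ℂ) : ℝ :=
  Hmin ε (marg (fun q : (α × (α × β)) × β => ((q.1.1, q.2), q.1.2)) (purifyVec ρ))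

/-- Frobenius (Schatten 2-) norm. -/
def frobNorm {ι : Type*} [Fintype ι] (M : Matrix ι ι ℂ) : ℝ :=
  Real.sqrt (∑ i, ∑ j, ‖M i j‖ ^ 2)

/-- Real power of a Hermitian matrix through its spectral decomposition
(junk value `0` for non-Hermitian input). -/
def rpowMat [Fintype ι] [DecidableEq ι] (σ : Matrix ι ι ℂ) (r : ℝ) : Matrix ι ι ℂ :=
  if h : σ.IsHermitian then
    (h.eigenvectorUnitary : Matrix ι ι ℂ) *
      Matrix.diagonal (fun i => ((h.eigenvalues i ^ r : ℝ) : ℂ)) *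
      (h.eigenvectorUnitary : Matrix ι ι ℂ)ᴴ
  else 0

/-- ε-smooth sandwiched Rényi-2 conditional entropy `H₂^ε(A|B)_ρ`, conditioning on the
second factor. -/
def H2 {α β : Type*} [Fintype α] [DecidableEq α] [Fintype β] [DecidableEq β]
    (ε : ℝ) (ρ : Matrix (α × β) (α × β) ℂ) : ℝ :=
  -2 * Real.logb 2 (sInf {t : ℝ | ∃ ρ' : Matrix (α × β) (α × β) ℂ, ∃ σ : Matrix β β ℂ,
      IsSubState ρ' ∧ pDist ρ' ρ ≤ ε ∧ σ.PosDef ∧ σ.trace = 1 ∧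
      t = frobNorm (((1 : Matrix α α ℂ) ⊗ₖ rpowMat σ (-(1/4 : ℝ))) * ρ' *
        ((1 : Matrix α α ℂ) ⊗ₖ rpowMat σ (-(1/4 : ℝ))))})

/-- Unconditional smooth sandwiched Rényi-2 entropy. -/
def H20 {α : Type*} [Fintype α] [DecidableEq α] (ε : ℝ) (ρ : Matrix α α ℂ) : ℝ :=
  H2 ε (ρ.submatrix (fun p : α × Unit => p.1) (fun p : α × Unit => p.1))

/-- `op^{X→Y}` : reinterpret a vector on `X ⊗ Y` as an operator from `X` to `Y`. -/
def opMat {X Y : Type*} (v : X × Y → ℂ) : Matrix Y X ℂ :=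
  Matrix.of fun y x => v (x, y)

/-- Apply an operator on the first tensor factor of a vector. -/
def applyLeft {X Y R : Type*} [Fintype X] (M : Matrix Y X ℂ) (w : X × R → ℂ) : Y × R → ℂ :=
  fun p => ∑ x, M p.1 x * w (x, p.2)

/-- Linearity of a superoperator. -/
def IsLin (Φ : Matrix ι ι ℂ → Matrix κ κ ℂ) : Prop :=
  ∀ (c : ℂ) (M N : Matrix ι ι ℂ), Φ (c • M + N) = c • Φ M + Φ N

/-- Tensor extension `Φ ⊗ id_R` of a superoperator, acting on the first factor. -/
def extAncilla (Φ : Matrix ι ι ℂ → Matrix κ κ ℂ) {R : Type*}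
    (M : Matrix (ι × R) (ι × R) ℂ) : Matrix (κ × R) (κ × R) ℂ :=
  Matrix.of fun x y => Φ (Matrix.of fun a b => M (a, x.2) (b, y.2)) x.1 y.1

/-- Complete positivity. -/
def IsCP [Fintype ι] [Fintype κ] (Φ : Matrix ι ι ℂ → Matrix κ κ ℂ) : Prop :=
  ∀ (R : Type) [Fintype R], ∀ M : Matrix (ι × R) (ι × R) ℂ,
    M.PosSemidef → (extAncilla Φ M).PosSemidef

/-- Trace preservation. -/
def IsTP [Fintype ι] [Fintype κ] (Φ : Matrix ι ι ℂ → Matrix κ κ ℂ) : Prop :=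
  ∀ M : Matrix ι ι ℂ, (Φ M).trace = M.trace

/-- Quantum channel: linear, completely positive, trace preserving. -/
def IsCPTP [Fintype ι] [Fintype κ] (Φ : Matrix ι ι ℂ → Matrix κ κ ℂ) : Prop :=
  IsLin Φ ∧ IsCP Φ ∧ IsTP Φ

/-- `V` is a Stinespring dilation (with environment `E`) of the superoperator `Φ`. -/
def IsStinespring {E : Type*} [Fintype ι] [DecidableEq ι] [Fintype κ] [Fintype E]
    (Φ : Matrix ι ι ℂ → Matrix κ κ ℂ) (V : Matrix (κ × E) ι ℂ) : Prop :=
  Vᴴ * V = 1 ∧ ∀ M : Matrix ι ι ℂ, Φ M = ptraceSnd (V * M * Vᴴ)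

/-- von Neumann entropy (base 2). -/
def vN [Fintype ι] [DecidableEq ι] (ρ : Matrix ι ι ℂ) : ℝ :=
  if h : ρ.IsHermitian then -∑ i, (h.eigenvalues i) * Real.logb 2 (h.eigenvalues i) else 0

/-- Coherent information `I(A>B)_ρ = H(B) − H(AB)` of a bipartite state. -/
def cohInfo {α β : Type*} [Fintype α] [DecidableEq α] [Fintype β] [DecidableEq β]
    (ρ : Matrix (α × β) (α × β) ℂ) : ℝ :=
  vN (ptraceFst ρ) - vN ρ

/-- (Left- and right-) invariant probability measure on the unitary group, i.e.,
the Haar probability measure. -/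
def IsHaarLike {ι : Type*} [Fintype ι] [DecidableEq ι]
    (μ : Measure ↥(Matrix.unitaryGroup ι ℂ)) : Prop :=
  (∀ V : ↥(Matrix.unitaryGroup ι ℂ), Measure.map (fun U => V * U) μ = μ) ∧
  (∀ V : ↥(Matrix.unitaryGroup ι ℂ), Measure.map (fun U => U * V) μ = μ)

/-- Maximally entangled (EPR) vector of rank `m`. -/
def mevec (m : ℕ) : Fin m × Fin m → ℂ :=
  fun p => if p.1 = p.2 then ((1 / Real.sqrt m : ℝ) : ℂ) else 0

/-- Maximally mixed state. -/
def mms (ι : Type*) [Fintype ι] [DecidableEq ι] : Matrix ι ι ℂ :=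
  ((Fintype.card ι : ℂ)⁻¹) • (1 : Matrix ι ι ℂ)

end QIT


/-! For a Hermitian `H`, `‖H‖₁ = ∑ |λᵢ(H)|` is the maximum of `Re tr (S H)` over unitaries `S`,
attained at the sign `S = sgn H`. This gives the triangle inequality and contractivity under the
partial trace, because `tr (S · tr_A X) = tr ((1 ⊗ S) X)` and `1 ⊗ S` is unitary. Then
`‖ρ - σ^A ⊗ σ^B ⊗ η^C‖₁ ≤ ‖ρ - σ^A ⊗ ω^{BC}‖₁ + ‖ω^{BC} - σ^B ⊗ η^C‖₁` by the triangle inequality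
and `‖σ^A ⊗ X‖₁ = ‖X‖₁`, and tracing out `A` in the two hypotheses gives
`‖ω^{BC} - ρ^{BC}‖₁ ≤ ε₁` and `‖ρ^{BC} - σ^B ⊗ η^C‖₁ ≤ ε₂`. -/

namespace Matrix

variable {n m α 𝕜 : Type*}

lemma trace_submatrix_equiv [Fintype n] [Fintype m] [AddCommMonoid α] (e : m ≃ n)
    (M : Matrix n n α) :
    (M.submatrix e e).trace = M.trace :=
  e.sum_comp M.diag

lemma kronecker_sub [NonUnitalNonAssocRing α] (M : Matrix m m α) (N N' : Matrix n n α) :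
    M ⊗ₖ (N - N') = M ⊗ₖ N - M ⊗ₖ N' := by
  ext
  simp [mul_sub]

lemma IsHermitian.kronecker [CommSemiring α] [StarRing α] {M : Matrix m m α} {N : Matrix n n α}
    (hM : M.IsHermitian) (hN : N.IsHermitian) : (M ⊗ₖ N).IsHermitian := by
  rw [IsHermitian, conjTranspose_kronecker, hM.eq, hN.eq]

lemma IsHermitian.trace_cfc [Fintype n] [DecidableEq n] [RCLike 𝕜] {A : Matrix n n 𝕜}
    (hA : A.IsHermitian) (f : ℝ → ℝ) :
    (cfc f A).trace = ∑ i, (f (hA.eigenvalues i) : 𝕜) := by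
  rw [hA.cfc_eq, IsHermitian.cfc, Unitary.conjStarAlgAut_apply, trace_mul_cycle,
    Unitary.coe_star_mul_self, one_mul, trace_diagonal]
  rfl

end Matrix

namespace QIT

open scoped MatrixOrder

variable {n m : Type*} [Fintype n] [DecidableEq n] [Fintype m] [DecidableEq m]

lemma traceNorm_eq_trace_sqrt (M : Matrix n n ℂ) :
    (traceNorm M : ℂ) = (CFC.sqrt (Mᴴ * M)).trace := by
  rw [CFC.sqrt_eq_real_sqrt _ (posSemidef_conjTranspose_mul_self M).nonneg, cfcₙ_eq_cfc,
    (isHermitian_conjTranspose_mul_self M).trace_cfc, traceNorm]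
  push_cast
  rfl

lemma traceNorm_eq_trace_of_mul_self_eq {M P : Matrix n n ℂ} (hP : P.PosSemidef)
    (h : P * P = Mᴴ * M) : (traceNorm M : ℂ) = P.trace := by
  rw [traceNorm_eq_trace_sqrt, CFC.sqrt_unique h hP.nonneg]

lemma traceNorm_neg (M : Matrix n n ℂ) : traceNorm (-M) = traceNorm M := by
  have := traceNorm_eq_trace_sqrt (-M)
  rw [conjTranspose_neg, neg_mul_neg, ← traceNorm_eq_trace_sqrt] at this
  exact_mod_cast this

lemma traceNorm_sub_comm (M N : Matrix n n ℂ) : traceNorm (M - N) = traceNorm (N - M) := by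
  rw [← traceNorm_neg, neg_sub]

lemma traceNorm_submatrix_equiv (e : m ≃ n) (M : Matrix n n ℂ) :
    traceNorm (M.submatrix e e) = traceNorm M := by
  have hM := posSemidef_conjTranspose_mul_self M
  have hP := (CFC.sqrt_nonneg (Mᴴ * M)).posSemidef.submatrix e
  have := traceNorm_eq_trace_of_mul_self_eq hP (by
    rw [submatrix_mul_equiv _ _ _ e, CFC.sqrt_mul_sqrt_self _ hM.nonneg,
      conjTranspose_submatrix, submatrix_mul_equiv _ _ _ e])
  rw [trace_submatrix_equiv, ← traceNorm_eq_trace_sqrt] at this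
  exact_mod_cast this

lemma traceNorm_kronecker (M : Matrix m m ℂ) (N : Matrix n n ℂ) :
    traceNorm (M ⊗ₖ N) = traceNorm M * traceNorm N := by
  have hM := posSemidef_conjTranspose_mul_self M
  have hN := posSemidef_conjTranspose_mul_self N
  have hP := (CFC.sqrt_nonneg (Mᴴ * M)).posSemidef.kronecker (CFC.sqrt_nonneg (Nᴴ * N)).posSemidef
  have := traceNorm_eq_trace_of_mul_self_eq hP (by
    rw [conjTranspose_kronecker, ← mul_kronecker_mul, ← mul_kronecker_mul,
      CFC.sqrt_mul_sqrt_self _ hM.nonneg, CFC.sqrt_mul_sqrt_self _ hN.nonneg])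
  rw [trace_kronecker, ← traceNorm_eq_trace_sqrt, ← traceNorm_eq_trace_sqrt] at this
  exact_mod_cast this

lemma traceNorm_of_posSemidef {P : Matrix n n ℂ} (hP : P.PosSemidef) :
    traceNorm P = P.trace.re := by
  have := traceNorm_eq_trace_of_mul_self_eq hP (by rw [hP.1.eq])
  rw [← this, Complex.ofReal_re]

lemma IsState.traceNorm_eq_one {ρ : Matrix n n ℂ} (hρ : IsState ρ) : traceNorm ρ = 1 := by
  rw [traceNorm_of_posSemidef hρ.1, hρ.2, Complex.one_re]

lemma _root_.Matrix.IsHermitian.traceNorm_eq_trace_cfc_abs {H : Matrix n n ℂ}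
    (hH : H.IsHermitian) : (traceNorm H : ℂ) = (cfc (fun x : ℝ => |x|) H).trace := by
  refine traceNorm_eq_trace_of_mul_self_eq
    (nonneg_iff_posSemidef.mp (cfc_nonneg (f := fun x : ℝ => |x|) fun x _ => abs_nonneg x)) ?_
  rw [← cfc_mul .., hH.eq]
  conv_rhs => rw [← cfc_id' ℝ H, ← cfc_mul ..]
  exact cfc_congr fun x _ => abs_mul_abs_self x

lemma _root_.Matrix.IsHermitian.traceNorm_eq_sum_abs_eigenvalues {H : Matrix n n ℂ}
    (hH : H.IsHermitian) : traceNorm H = ∑ i, |hH.eigenvalues i| := by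
  have := hH.traceNorm_eq_trace_cfc_abs
  rw [hH.trace_cfc, ← RCLike.ofReal_eq_complex_ofReal] at this
  exact_mod_cast this

lemma _root_.Matrix.IsHermitian.re_trace_unitary_mul_le_traceNorm {H X : Matrix n n ℂ}
    (hH : H.IsHermitian) (hX : X ∈ unitaryGroup n ℂ) : (X * H).trace.re ≤ traceNorm H := by
  obtain ⟨U, hU, hspec⟩ : ∃ U ∈ unitaryGroup n ℂ,
      H = U * diagonal (fun i => (hH.eigenvalues i : ℂ)) * star U :=
    ⟨_, hH.eigenvectorUnitary.2, hH.spectral_theorem⟩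
  have hY : star U * X * U ∈ unitaryGroup n ℂ :=
    mul_mem (mul_mem (Unitary.star_mem hU) hX) hU
  have htrace : (X * H).trace = ∑ i, (star U * X * U) i i * hH.eigenvalues i := by
    conv_lhs => rw [hspec, ← Matrix.mul_assoc, ← Matrix.mul_assoc, trace_mul_comm,
      ← Matrix.mul_assoc, ← Matrix.mul_assoc]
    simp [trace, mul_diagonal]
  rw [htrace, hH.traceNorm_eq_sum_abs_eigenvalues, Complex.re_sum]
  refine Finset.sum_le_sum fun i _ => ?_
  rw [Complex.re_mul_ofReal]
  calc ((star U * X * U) i i).re * hH.eigenvalues i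
      ≤ |((star U * X * U) i i).re| * |hH.eigenvalues i| := by rw [← abs_mul]; exact le_abs_self _
    _ ≤ 1 * |hH.eigenvalues i| := by
      gcongr
      exact (Complex.abs_re_le_norm _).trans (entry_norm_bound_of_unitary hY i i)
    _ = |hH.eigenvalues i| := one_mul _

lemma _root_.Matrix.IsHermitian.exists_unitary_re_trace_mul_eq_traceNorm {H : Matrix n n ℂ}
    (hH : H.IsHermitian) : ∃ S ∈ unitaryGroup n ℂ, (S * H).trace.re = traceNorm H := by
  set sgn : ℝ → ℝ := fun x => if 0 ≤ x then 1 else -1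
  have hsgn : ∀ x, sgn x * sgn x = 1 := fun x => by by_cases h : 0 ≤ x <;> simp [sgn, h]
  -- picked up by `cfc_tac` for the continuity side goals below
  have hcont : ContinuousOn sgn (spectrum ℝ H) := H.finite_real_spectrum.continuousOn _
  have hS : IsSelfAdjoint (cfc sgn H) := cfc_predicate sgn H
  have hSH : cfc sgn H * H = cfc (fun x : ℝ => |x|) H := by
    nth_rw 2 [← cfc_id' ℝ H]
    rw [← cfc_mul ..]
    refine cfc_congr fun x _ => ?_
    by_cases h : 0 ≤ x
    · simp [sgn, h, abs_of_nonneg h]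
    · simp [sgn, h, abs_of_neg (not_le.mp h)]
  refine ⟨cfc sgn H, ?_, ?_⟩
  · rw [mem_unitaryGroup_iff', hS.star_eq, ← cfc_mul .., cfc_congr (fun x _ => hsgn x),
      cfc_const_one ℝ H]
  · rw [hSH, ← hH.traceNorm_eq_trace_cfc_abs, Complex.ofReal_re]

lemma traceNorm_add_le {G H : Matrix n n ℂ} (hG : G.IsHermitian) (hH : H.IsHermitian) :
    traceNorm (G + H) ≤ traceNorm G + traceNorm H := by
  obtain ⟨S, hS, hSGH⟩ := (hG.add hH).exists_unitary_re_trace_mul_eq_traceNorm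
  rw [← hSGH, Matrix.mul_add, trace_add, Complex.add_re]
  exact add_le_add (hG.re_trace_unitary_mul_le_traceNorm hS)
    (hH.re_trace_unitary_mul_le_traceNorm hS)

lemma traceNorm_sub_le_traceNorm_sub_add_traceNorm_sub {X Y Z : Matrix n n ℂ}
    (hX : X.IsHermitian) (hY : Y.IsHermitian) (hZ : Z.IsHermitian) :
    traceNorm (X - Z) ≤ traceNorm (X - Y) + traceNorm (Y - Z) := by
  rw [← sub_add_sub_cancel X Y Z]
  exact traceNorm_add_le (hX.sub hY) (hY.sub hZ)

section PartialTrace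

variable {T K : Type*} [Fintype T] [DecidableEq T] [Fintype K] [DecidableEq K]

omit [DecidableEq T] [Fintype K] [DecidableEq K] in
lemma _root_.Matrix.IsHermitian.ptraceFst {M : Matrix (T × K) (T × K) ℂ} (hM : M.IsHermitian) :
    (ptraceFst M).IsHermitian := by
  ext k k'
  simp only [conjTranspose_apply, QIT.ptraceFst, of_apply, star_sum]
  exact Finset.sum_congr rfl fun t _ => by rw [← conjTranspose_apply, hM.eq]

omit [DecidableEq T] [Fintype K] [DecidableEq K] in
lemma ptraceFst_sub (M N : Matrix (T × K) (T × K) ℂ) :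
    ptraceFst (M - N) = ptraceFst M - ptraceFst N := by
  ext k k'
  simp [ptraceFst, Finset.sum_sub_distrib]

omit [DecidableEq T] [Fintype K] [DecidableEq K] in
lemma ptraceFst_kronecker (σ : Matrix T T ℂ) (ω : Matrix K K ℂ) :
    ptraceFst (σ ⊗ₖ ω) = σ.trace • ω := by
  ext k k'
  simp [ptraceFst, trace, Finset.sum_mul]

omit [DecidableEq K] in
lemma trace_mul_ptraceFst (S : Matrix K K ℂ) (M : Matrix (T × K) (T × K) ℂ) :
    (S * ptraceFst M).trace = (((1 : Matrix T T ℂ) ⊗ₖ S) * M).trace := by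
  simp only [trace, diag, mul_apply, ptraceFst, of_apply, Fintype.sum_prod_type,
    kroneckerMap_apply, one_apply, ite_mul, one_mul, zero_mul, Finset.mul_sum]
  conv_rhs => enter [2, t, 2, k]; rw [Finset.sum_comm]
  simp only [Finset.sum_ite_eq, Finset.mem_univ, if_true]
  conv_rhs => rw [Finset.sum_comm]; enter [2, k]; rw [Finset.sum_comm]

lemma _root_.Matrix.IsHermitian.traceNorm_ptraceFst_le {M : Matrix (T × K) (T × K) ℂ}
    (hM : M.IsHermitian) : traceNorm (ptraceFst M) ≤ traceNorm M := by
  obtain ⟨S, hS, hSM⟩ := hM.ptraceFst.exists_unitary_re_trace_mul_eq_traceNorm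
  rw [← hSM, trace_mul_ptraceFst]
  exact hM.re_trace_unitary_mul_le_traceNorm (kronecker_mem_unitary (one_mem _) hS)

lemma traceNorm_ptraceFst_sub_le {ρ : Matrix (T × K) (T × K) ℂ} {σ : Matrix T T ℂ}
    {ω : Matrix K K ℂ} (hρ : ρ.IsHermitian) (hσ : σ.IsHermitian) (hω : ω.IsHermitian)
    (htr : σ.trace = 1) : traceNorm (ptraceFst ρ - ω) ≤ traceNorm (ρ - σ ⊗ₖ ω) := by
  have hω' : ptraceFst (σ ⊗ₖ ω) = ω := by rw [ptraceFst_kronecker, htr, one_smul]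
  conv_lhs => rw [← hω', ← ptraceFst_sub]
  exact (hρ.sub (hσ.kronecker hω)).traceNorm_ptraceFst_le

omit [DecidableEq T] [Fintype K] [DecidableEq K] in
lemma ptraceFst_submatrix_prodAssoc_kronecker {L : Type*} (X : Matrix (T × K) (T × K) ℂ)
    (Y : Matrix L L ℂ) :
    ptraceFst ((X ⊗ₖ Y).submatrix (Equiv.prodAssoc T K L).symm (Equiv.prodAssoc T K L).symm) =
      ptraceFst X ⊗ₖ Y := by
  ext ⟨k, l⟩ ⟨k', l'⟩
  simp [ptraceFst, Finset.sum_mul]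

lemma traceNorm_ptraceFst_sub_ptraceFst_kronecker_le {L : Type*} [Fintype L] [DecidableEq L]
    {ρ : Matrix (T × K × L) (T × K × L) ℂ} {X : Matrix (T × K) (T × K) ℂ} {Y : Matrix L L ℂ}
    (hρ : ρ.IsHermitian) (hX : X.IsHermitian) (hY : Y.IsHermitian) :
    traceNorm (ptraceFst ρ - ptraceFst X ⊗ₖ Y) ≤
      traceNorm (ρ.submatrix (Equiv.prodAssoc T K L) (Equiv.prodAssoc T K L) - X ⊗ₖ Y) := by
  set e := Equiv.prodAssoc T K L
  have hreindex : (ρ.submatrix e e - X ⊗ₖ Y).submatrix e.symm e.symm =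
      ρ - (X ⊗ₖ Y).submatrix e.symm e.symm := by
    ext
    simp
  rw [← ptraceFst_submatrix_prodAssoc_kronecker, ← ptraceFst_sub,
    ← traceNorm_submatrix_equiv e.symm, hreindex]
  exact (hρ.sub ((hX.kronecker hY).submatrix _)).traceNorm_ptraceFst_le

end PartialTrace

end QIT

open QIT in
/-- If `ρ^{ABC}` is close to `σ^A ⊗ ω^{BC}` and to `σ^{AB} ⊗ η^C`, then it is
`2ε₁ + ε₂`-close to `σ^A ⊗ σ^B ⊗ η^C`, where `σ^B` is the `B`-marginal of `σ^{AB}`. -/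
theorem traceNorm_triple_product_approx
    {A B C : Type*} [Fintype A] [DecidableEq A] [Fintype B] [DecidableEq B]
    [Fintype C] [DecidableEq C]
    (ρ : Matrix (A × B × C) (A × B × C) ℂ) (σA : Matrix A A ℂ) (ηC : Matrix C C ℂ)
    (σAB : Matrix (A × B) (A × B) ℂ) (ωBC : Matrix (B × C) (B × C) ℂ)
    (hρ : IsState ρ) (hσA : IsState σA) (hηC : IsState ηC)
    (hσAB : IsState σAB) (hωBC : IsState ωBC)
    (ε₁ ε₂ : ℝ)
    (h₁ : traceNorm (ρ - σA ⊗ₖ ωBC) ≤ ε₁)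
    (h₂ : traceNorm (ρ.submatrix (fun p : (A × B) × C => (p.1.1, p.1.2, p.2))
            (fun p : (A × B) × C => (p.1.1, p.1.2, p.2)) - σAB ⊗ₖ ηC) ≤ ε₂) :
    traceNorm (ρ - σA ⊗ₖ (ptraceFst σAB ⊗ₖ ηC)) ≤ 2 * ε₁ + ε₂ := by
  have hσBηC : (ptraceFst σAB ⊗ₖ ηC).IsHermitian := hσAB.1.1.ptraceFst.kronecker hηC.1.1
  have hωBC_close : traceNorm (ptraceFst ρ - ωBC) ≤ ε₁ :=
    (traceNorm_ptraceFst_sub_le hρ.1.1 hσA.1.1 hωBC.1.1 hσA.2).trans h₁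
  have hσBηC_close : traceNorm (ptraceFst ρ - ptraceFst σAB ⊗ₖ ηC) ≤ ε₂ :=
    (traceNorm_ptraceFst_sub_ptraceFst_kronecker_le hρ.1.1 hσAB.1.1 hηC.1.1).trans h₂
  calc traceNorm (ρ - σA ⊗ₖ (ptraceFst σAB ⊗ₖ ηC))
      ≤ traceNorm (ρ - σA ⊗ₖ ωBC) + traceNorm (σA ⊗ₖ ωBC - σA ⊗ₖ (ptraceFst σAB ⊗ₖ ηC)) :=
        traceNorm_sub_le_traceNorm_sub_add_traceNorm_sub hρ.1.1 (hσA.1.1.kronecker hωBC.1.1)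
          (hσA.1.1.kronecker hσBηC)
    _ = traceNorm (ρ - σA ⊗ₖ ωBC) + traceNorm (ωBC - ptraceFst σAB ⊗ₖ ηC) := by
        rw [← kronecker_sub, traceNorm_kronecker, hσA.traceNorm_eq_one, one_mul]
    _ ≤ ε₁ + (traceNorm (ωBC - ptraceFst ρ) + traceNorm (ptraceFst ρ - ptraceFst σAB ⊗ₖ ηC)) :=
        add_le_add h₁ (traceNorm_sub_le_traceNorm_sub_add_traceNorm_sub hωBC.1.1
          hρ.1.1.ptraceFst hσBηC)
    _ ≤ 2 * ε₁ + ε₂ := by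
        rw [traceNorm_sub_comm ωBC]
        linarith
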